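/- Let d ≥ 1 and let φ : ℝ^d → ℝ^d be a bi-Lipschitz homeomorphism preserving Lebesgue measure. Let β : (0,∞) × ℝ^d → ℝ be measurable and bounded, let μ be the measure on (0,∞) × ℝ^d with density |β(t,x)|²/t with respect to dt ⊗ dx, and suppose μ is a Carleson measure with norm at most M and that ‖β‖_{L^∞}² ≤ C₀·M for some C₀ > 0. Then the measure μ^{♯φ} with density |β(t, φ(x))|²/t with respect to dt ⊗ dx is a Carleson measure with norm at most C·(1 + C₀)·log(K(φ))·M, where C depends only on d. -/

import Mathlib

/-!
Split the Carleson box `(0, r] × B(x, r)` at the height `s = r / K(φ)`. Since `φ` preserves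
measure, the pulled-back measure of the box equals the measure of `(0, r] × φ(B(x, r))`.
Below height `s`: `φ⁻¹` is `K`-Lipschitz, so the `s`-neighbourhood of `φ(B(x, r))` lies in
`φ(B(x, 2r))`, and averaging the Carleson condition over the balls of radius `s` centred in that
neighbourhood bounds this part by `2^d M |B(x, r)|`. Above height `s`: `β² ≤ C₀ M` gives the bound
`∫_s^r C₀ M dt / t · |B(x, r)| = C₀ M log K · |B(x, r)|`.
-/

open Metric MeasureTheory Set

/-- `K(φ)`: the supremum over pairs of distinct points of
`|φ(x) − φ(y)|/|x − y| + |x − y|/|φ(x) − φ(y)|`. -/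
noncomputable def Kconst {d : ℕ} (φ : EuclideanSpace ℝ (Fin d) → EuclideanSpace ℝ (Fin d)) : ℝ :=
  ⨆ q : {p : EuclideanSpace ℝ (Fin d) × EuclideanSpace ℝ (Fin d) // p.1 ≠ p.2},
    dist (φ q.1.1) (φ q.1.2) / dist q.1.1 q.1.2 +
      dist q.1.1 q.1.2 / dist (φ q.1.1) (φ q.1.2)

open Function
open scoped ENNReal NNReal

section Kconst

variable {d : ℕ} {φ : EuclideanSpace ℝ (Fin d) → EuclideanSpace ℝ (Fin d)} {A A' : ℝ≥0}

theorem le_Kconst (hinj : Injective φ) (hA : LipschitzWith A φ)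
    (hA' : LipschitzWith A' (invFun φ)) {x y : EuclideanSpace ℝ (Fin d)} (hxy : x ≠ y) :
    dist (φ x) (φ y) / dist x y + dist x y / dist (φ x) (φ y) ≤ Kconst φ := by
  refine le_ciSup (f := fun q : {p : EuclideanSpace ℝ (Fin d) × EuclideanSpace ℝ (Fin d) //
    p.1 ≠ p.2} => dist (φ q.1.1) (φ q.1.2) / dist q.1.1 q.1.2 +
      dist q.1.1 q.1.2 / dist (φ q.1.1) (φ q.1.2)) ⟨A + A', ?_⟩ ⟨(x, y), hxy⟩
  rintro _ ⟨⟨⟨a, b⟩, hab⟩, rfl⟩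
  have hdist : 0 < dist a b := dist_pos.2 hab
  have hdist' : 0 < dist (φ a) (φ b) := dist_pos.2 (hinj.ne hab)
  have hinv := hA'.dist_le_mul (φ a) (φ b)
  rw [leftInverse_invFun hinj a, leftInverse_invFun hinj b] at hinv
  exact add_le_add ((div_le_iff₀ hdist).2 (hA.dist_le_mul a b)) ((div_le_iff₀ hdist').2 hinv)

theorem two_le_Kconst [Nontrivial (EuclideanSpace ℝ (Fin d))] (hinj : Injective φ)
    (hA : LipschitzWith A φ) (hA' : LipschitzWith A' (invFun φ)) : 2 ≤ Kconst φ := by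
  obtain ⟨x, y, hxy⟩ := exists_pair_ne (EuclideanSpace ℝ (Fin d))
  refine le_trans ?_ (le_Kconst hinj hA hA' hxy)
  have ha : 0 < dist (φ x) (φ y) := dist_pos.2 (hinj.ne hxy)
  have hb : 0 < dist x y := dist_pos.2 hxy
  rw [div_add_div _ _ hb.ne' ha.ne', le_div_iff₀ (by positivity)]
  nlinarith [sq_nonneg (dist (φ x) (φ y) - dist x y)]

theorem dist_invFun_le_Kconst_mul (hbij : Bijective φ) (hA : LipschitzWith A φ)
    (hA' : LipschitzWith A' (invFun φ)) (x y : EuclideanSpace ℝ (Fin d)) :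
    dist (invFun φ x) (invFun φ y) ≤ Kconst φ * dist x y := by
  rcases eq_or_ne x y with rfl | hxy
  · simp
  have hψ := rightInverse_invFun hbij.surjective
  have hK := le_Kconst hbij.injective hA hA' (hψ.injective.ne hxy)
  rw [hψ x, hψ y] at hK
  have hdist : 0 < dist x y := dist_pos.2 hxy
  have := (le_add_of_nonneg_left (by positivity)).trans hK
  rwa [div_le_iff₀ hdist] at this

end Kconst

theorem thickening_preimage_ball_subset {X Y : Type*} [PseudoMetricSpace X] [PseudoMetricSpace Y]
    {ψ : X → Y} {K : ℝ} (hK : 0 ≤ K) (hψ : ∀ a b, dist (ψ a) (ψ b) ≤ K * dist a b) (y : Y)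
    (r s : ℝ) : thickening s (ψ ⁻¹' ball y r) ⊆ ψ ⁻¹' ball y (r + K * s) := by
  intro c hc
  obtain ⟨z, hz, hcz⟩ := mem_thickening_iff.1 hc
  calc dist (ψ c) y ≤ dist (ψ c) (ψ z) + dist (ψ z) y := dist_triangle _ _ _
    _ < K * s + r := add_lt_add_of_le_of_lt
        ((hψ c z).trans (mul_le_mul_of_nonneg_left hcz.le hK)) hz
    _ = r + K * s := add_comm _ _

theorem MeasureTheory.MeasurePreserving.of_leftInverse {X Y : Type*} [MeasurableSpace X]
    [MeasurableSpace Y] {μ : Measure X} {ν : Measure Y} {f : X → Y} {g : Y → X}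
    (hf : MeasurePreserving f μ ν) (hg : Measurable g) (hgf : Function.LeftInverse g f) :
    MeasurePreserving g ν μ := by
  refine ⟨hg, Measure.ext fun A hA => ?_⟩
  rw [Measure.map_apply hg hA, ← hf.measure_preimage (hg hA).nullMeasurableSet,
    ← preimage_comp, hgf.comp_eq_id, preimage_id]

namespace MeasureTheory.Measure

variable {E : Type*} [NormedAddCommGroup E] [NormedSpace ℝ E] [FiniteDimensional ℝ E]
  [MeasurableSpace E] [BorelSpace E] (μ : Measure E) [μ.IsAddHaarMeasure]

theorem addHaar_ball_two_mul (x : E) (r : ℝ) :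
    μ (ball x (2 * r)) = ENNReal.ofReal (2 ^ Module.finrank ℝ E) * μ (ball x r) := by
  rw [addHaar_ball_mul_of_pos μ x two_pos, addHaar_ball_center μ x]

end MeasureTheory.Measure

section Averaging

variable {α E : Type*} [MeasurableSpace α] [NormedAddCommGroup E] [NormedSpace ℝ E]
  [FiniteDimensional ℝ E] [MeasurableSpace E] [BorelSpace E] (μ : Measure E) [μ.IsAddHaarMeasure]

/-- Fubini applied to `{(p, c) : dist c p.2 < s}` averages the ball bound over the centres. -/
theorem measure_prod_le_mul_measure_thickening (ν : Measure (α × E)) [SFinite ν] (I : Set α)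
    (S : Set E) {s : ℝ} (hs : 0 < s) {m : ℝ≥0∞}
    (h : ∀ c, ν (I ×ˢ ball c s) ≤ m * μ (ball c s)) :
    ν (I ×ˢ S) ≤ m * μ (thickening s S) := by
  let U : Set ((α × E) × E) := {p | dist p.2 p.1.2 < s}
  have hU : MeasurableSet U := measurableSet_lt (by fun_prop) measurable_const
  have hfst : ((ν.restrict (I ×ˢ S)).prod μ) U = μ (ball (0 : E) s) * ν (I ×ˢ S) := by
    rw [Measure.prod_apply hU]
    have hslice (q : α × E) : Prod.mk q ⁻¹' U = ball q.2 s := by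
      ext c; simp [U, mem_ball]
    simp only [hslice, Measure.addHaar_ball_center μ, lintegral_const, Measure.restrict_apply_univ]
  have hsnd : ((ν.restrict (I ×ˢ S)).prod μ) U ≤ m * μ (ball (0 : E) s) * μ (thickening s S) := by
    rw [Measure.prod_apply_symm hU]
    have hslice (c : E) : (fun q : α × E => (q, c)) ⁻¹' U = univ ×ˢ ball c s := by
      ext q; simp [U, mem_ball, dist_comm]
    have hbound (c : E) : ν.restrict (I ×ˢ S) ((fun q => (q, c)) ⁻¹' U)
        ≤ (thickening s S).indicator (fun _ => m * μ (ball (0 : E) s)) c := by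
      rw [hslice, Measure.restrict_apply (MeasurableSet.univ.prod measurableSet_ball),
        prod_inter_prod, univ_inter]
      by_cases hc : c ∈ thickening s S
      · rw [indicator_of_mem hc, ← Measure.addHaar_ball_center μ c]
        exact (measure_mono (prod_mono subset_rfl inter_subset_left)).trans (h c)
      · have hempty : ball c s ∩ S = ∅ := by
          refine eq_empty_of_forall_notMem fun y hy => hc (mem_thickening_iff.2 ⟨y, hy.2, ?_⟩)
          simpa [dist_comm] using hy.1
        simp [hempty]
    calc ∫⁻ c, ν.restrict (I ×ˢ S) ((fun q => (q, c)) ⁻¹' U) ∂μ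
        ≤ ∫⁻ c, (thickening s S).indicator (fun _ => m * μ (ball (0 : E) s)) c ∂μ :=
          lintegral_mono hbound
      _ = m * μ (ball (0 : E) s) * μ (thickening s S) := by
        rw [lintegral_indicator isOpen_thickening.measurableSet, setLIntegral_const]
  rw [← ENNReal.mul_le_mul_iff_right (measure_ball_pos μ _ hs).ne' measure_ball_lt_top.ne, ← hfst]
  calc _ ≤ m * μ (ball (0 : E) s) * μ (thickening s S) := hsnd
    _ = _ := by ring

end Averaging

section Carleson

variable {E : Type*} [PseudoMetricSpace E] [MeasurableSpace E]

def IsCarlesonWith (μ : Measure E) (ν : Measure (ℝ × E)) (M : ℝ) : Prop :=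
  ∀ (x : E) (r : ℝ), 0 < r → ν (Ioc 0 r ×ˢ ball x r) ≤ ENNReal.ofReal M * μ (ball x r)

theorem IsCarlesonWith.mono {μ : Measure E} {ν : Measure (ℝ × E)} {M M' : ℝ}
    (h : IsCarlesonWith μ ν M) (hM : M ≤ M') : IsCarlesonWith μ ν M' := fun x r hr =>
  (h x r hr).trans (mul_le_mul_left (ENNReal.ofReal_le_ofReal hM) _)

end Carleson

section SmallScales

variable {E : Type*} [NormedAddCommGroup E] [NormedSpace ℝ E] [FiniteDimensional ℝ E]
  [MeasurableSpace E] [BorelSpace E] {μ : Measure E} [μ.IsAddHaarMeasure]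

theorem IsCarlesonWith.measure_Ioc_div_prod_preimage_ball_le {ν : Measure (ℝ × E)} [SFinite ν]
    {M : ℝ} (hν : IsCarlesonWith μ ν M) (hM : 0 ≤ M) {ψ : E → E} (hψ : MeasurePreserving ψ μ μ)
    {K : ℝ} (hK : 0 < K) (hψK : ∀ a b, dist (ψ a) (ψ b) ≤ K * dist a b) (x : E) {r : ℝ}
    (hr : 0 < r) :
    ν (Ioc 0 (r / K) ×ˢ (ψ ⁻¹' ball x r))
      ≤ ENNReal.ofReal (2 ^ Module.finrank ℝ E * M) * μ (ball x r) := by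
  have hs : 0 < r / K := div_pos hr hK
  have hKs : r + K * (r / K) = 2 * r := by field_simp; ring
  calc ν (Ioc 0 (r / K) ×ˢ (ψ ⁻¹' ball x r))
      ≤ ENNReal.ofReal M * μ (thickening (r / K) (ψ ⁻¹' ball x r)) :=
        measure_prod_le_mul_measure_thickening μ ν _ _ hs fun c => hν c _ hs
    _ ≤ ENNReal.ofReal M * μ (ψ ⁻¹' ball x (2 * r)) := by
        gcongr
        simpa only [hKs] using thickening_preimage_ball_subset hK.le hψK x r (r / K)
    _ = ENNReal.ofReal (2 ^ Module.finrank ℝ E * M) * μ (ball x r) := by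
        rw [hψ.measure_preimage measurableSet_ball.nullMeasurableSet,
          Measure.addHaar_ball_two_mul, ← mul_assoc, ← ENNReal.ofReal_mul hM, mul_comm M]

end SmallScales

theorem lintegral_Ioc_ofReal_div {c s r : ℝ} (hc : 0 ≤ c) (hs : 0 < s) (hsr : s ≤ r) :
    ∫⁻ t in Ioc s r, ENNReal.ofReal (c / t) = ENNReal.ofReal (c * Real.log (r / s)) := by
  have hint : IntegrableOn (fun t : ℝ => c / t) (Ioc s r) :=
    (continuousOn_const.div continuousOn_id fun t ht => (hs.trans_le ht.1).ne').integrableOn_compact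
      isCompact_Icc |>.mono_set Ioc_subset_Icc_self
  have hnonneg : 0 ≤ᵐ[volume.restrict (Ioc s r)] fun t : ℝ => c / t :=
    (ae_restrict_mem measurableSet_Ioc).mono fun t ht => div_nonneg hc (hs.trans ht.1).le
  rw [← ofReal_integral_eq_lintegral_ofReal hint hnonneg, ← intervalIntegral.integral_of_le hsr]
  simp only [div_eq_mul_inv c, intervalIntegral.integral_const_mul,
    integral_inv_of_pos hs (hs.trans_le hsr)]

theorem ae_sq_le_sq_toReal_eLpNorm_top {X : Type*} [MeasurableSpace X] {μ : Measure X}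
    {f : X → ℝ} (hf : AEStronglyMeasurable f μ) (hfin : eLpNorm f ⊤ μ < ⊤) :
    ∀ᵐ x ∂μ, f x ^ 2 ≤ (eLpNorm f ⊤ μ).toReal ^ 2 := by
  filter_upwards [ae_le_lpNorm_exponent_top ⟨hf, hfin⟩] with x hx
  rw [toReal_eLpNorm hf, sq_le_sq, abs_of_nonneg lpNorm_nonneg]
  exact hx

section SqDivTimeMeasure

variable {E : Type*} [MeasureSpace E]

noncomputable def sqDivTimeMeasure (β : ℝ × E → ℝ) : Measure (ℝ × E) :=
  (volume.restrict (Ioi (0 : ℝ) ×ˢ univ)).withDensity fun q => ENNReal.ofReal (β q ^ 2 / q.1)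

variable [SFinite (volume : Measure E)]

instance (β : ℝ × E → ℝ) : SFinite (sqDivTimeMeasure β) := by
  unfold sqDivTimeMeasure; infer_instance

theorem sqDivTimeMeasure_comp_apply_preimage {f : E → E} (hf : MeasurePreserving f)
    {β : ℝ × E → ℝ} (hβ : Measurable β) {A : Set (ℝ × E)} (hA : MeasurableSet A) :
    sqDivTimeMeasure (fun q => β (q.1, f q.2)) (Prod.map id f ⁻¹' A) = sqDivTimeMeasure β A := by
  have hR : MeasurableSet (Ioi (0 : ℝ) ×ˢ (univ : Set E)) := measurableSet_Ioi.prod .univ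
  have hF : MeasurePreserving (Prod.map id f) (volume.restrict (Ioi (0 : ℝ) ×ˢ univ))
      (volume.restrict (Ioi (0 : ℝ) ×ˢ univ)) := by
    have h := ((MeasurePreserving.id volume).prod hf).restrict_preimage hR
    rwa [← Measure.volume_eq_prod, preimage_prod_map_prod, preimage_id, preimage_univ] at h
  rw [sqDivTimeMeasure, sqDivTimeMeasure, withDensity_apply _ (hF.measurable hA),
    withDensity_apply _ hA]
  exact hF.setLIntegral_comp_preimage hA ((hβ.pow_const 2).div measurable_fst).ennreal_ofReal

theorem setLIntegral_Ioc_prod_ofReal_div_fst {c s r : ℝ} (hc : 0 ≤ c) (hs : 0 < s)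
    (hsr : s ≤ r) (S : Set E) :
    ∫⁻ q in Ioc s r ×ˢ S, ENNReal.ofReal (c / q.1)
      = ENNReal.ofReal (c * Real.log (r / s)) * volume S := by
  rw [Measure.volume_eq_prod, ← Measure.prod_restrict, lintegral_prod _ (by fun_prop)]
  simp only [lintegral_const, Measure.restrict_apply_univ]
  rw [lintegral_mul_const _ (by fun_prop), lintegral_Ioc_ofReal_div hc hs hsr]

theorem sqDivTimeMeasure_Ioc_prod_le {β : ℝ × E → ℝ} {N : ℝ} (hN : 0 ≤ N)
    (hβ : ∀ᵐ q ∂volume.restrict (Ioi (0 : ℝ) ×ˢ univ), β q ^ 2 ≤ N) {s r : ℝ} (hs : 0 < s)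
    (hsr : s ≤ r) (S : Set E) :
    sqDivTimeMeasure β (Ioc s r ×ˢ S) ≤ ENNReal.ofReal (N * Real.log (r / s)) * volume S := by
  have hsub : Ioc s r ×ˢ S ⊆ Ioi (0 : ℝ) ×ˢ univ :=
    prod_mono (fun t ht => hs.trans ht.1) (subset_univ S)
  have hR : MeasurableSet (Ioi (0 : ℝ) ×ˢ (univ : Set E)) := measurableSet_Ioi.prod .univ
  rw [sqDivTimeMeasure, withDensity_apply', Measure.restrict_restrict' hR, inter_eq_left.2 hsub,
    ← setLIntegral_Ioc_prod_ofReal_div_fst hN hs hsr]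
  refine lintegral_mono_ae ?_
  filter_upwards [ae_mono (Measure.restrict_mono hsub le_rfl)
    (hβ.and (ae_restrict_mem hR))] with q ⟨hq, hqpos⟩
  exact ENNReal.ofReal_le_ofReal (div_le_div_of_nonneg_right hq hqpos.1.le)

end SqDivTimeMeasure

theorem isCarlesonWith_sqDivTimeMeasure_comp {d : ℕ} [Nontrivial (EuclideanSpace ℝ (Fin d))]
    {φ : EuclideanSpace ℝ (Fin d) → EuclideanSpace ℝ (Fin d)} (hbij : Bijective φ)
    {A A' : ℝ≥0} (hA : LipschitzWith A φ) (hA' : LipschitzWith A' (invFun φ))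
    (hφ : MeasurePreserving φ) {β : ℝ × EuclideanSpace ℝ (Fin d) → ℝ} (hβ : Measurable β)
    {M N : ℝ} (hM : 0 ≤ M) (hN : 0 ≤ N)
    (hβN : ∀ᵐ q ∂volume.restrict (Ioi (0 : ℝ) ×ˢ univ), β q ^ 2 ≤ N)
    (hcar : IsCarlesonWith volume (sqDivTimeMeasure β) M) :
    IsCarlesonWith volume (sqDivTimeMeasure fun q => β (q.1, φ q.2))
      (2 ^ d * M + N * Real.log (Kconst φ)) := by
  intro x r hr
  have hK : 2 ≤ Kconst φ := two_le_Kconst hbij.injective hA hA'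
  have hψφ : LeftInverse (invFun φ) φ := leftInverse_invFun hbij.injective
  have hψ : MeasurePreserving (invFun φ) := hφ.of_leftInverse hA'.continuous.measurable hψφ
  set S := invFun φ ⁻¹' ball x r
  set s := r / Kconst φ
  have hs : 0 < s := div_pos hr (by linarith)
  have hsr : s ≤ r := div_le_self hr.le (by linarith)
  have hrs : r / s = Kconst φ := by rw [div_div_cancel₀ hr.ne']
  have hpreimage : Prod.map id φ ⁻¹' (Ioc 0 r ×ˢ S) = Ioc 0 r ×ˢ ball x r := by
    rw [preimage_prod_map_prod, preimage_id, ← preimage_comp, hψφ.comp_eq_id, preimage_id]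
  have hsmall := hcar.measure_Ioc_div_prod_preimage_ball_le hM hψ (by linarith)
    (dist_invFun_le_Kconst_mul hbij hA hA') x hr
  rw [finrank_euclideanSpace_fin] at hsmall
  have hlarge := sqDivTimeMeasure_Ioc_prod_le hN hβN hs hsr S
  rw [hrs, hψ.measure_preimage measurableSet_ball.nullMeasurableSet] at hlarge
  calc sqDivTimeMeasure (fun q => β (q.1, φ q.2)) (Ioc 0 r ×ˢ ball x r)
      = sqDivTimeMeasure β (Ioc 0 r ×ˢ S) := by
        rw [← hpreimage, sqDivTimeMeasure_comp_apply_preimage hφ hβ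
          (measurableSet_Ioc.prod (hA'.continuous.measurable measurableSet_ball))]
    _ ≤ sqDivTimeMeasure β (Ioc 0 s ×ˢ S) + sqDivTimeMeasure β (Ioc s r ×ˢ S) := by
        rw [← Ioc_union_Ioc_eq_Ioc hs.le hsr, union_prod]
        exact measure_union_le _ _
    _ ≤ ENNReal.ofReal (2 ^ d * M) * volume (ball x r)
        + ENNReal.ofReal (N * Real.log (Kconst φ)) * volume (ball x r) :=
        add_le_add hsmall hlarge
    _ = ENNReal.ofReal (2 ^ d * M + N * Real.log (Kconst φ)) * volume (ball x r) := by
        rw [← add_mul, ENNReal.ofReal_add (by positivity)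
          (mul_nonneg hN (Real.log_nonneg (by linarith)))]

theorem two_pow_mul_add_mul_log_le {d : ℕ} {M C₀ K : ℝ} (hM : 0 ≤ M) (hC₀ : 0 ≤ C₀)
    (hK : 2 ≤ K) :
    2 ^ d * M + C₀ * M * Real.log K ≤ (2 ^ d / Real.log 2 + 1) * (1 + C₀) * Real.log K * M := by
  have hlog2 : 0 < Real.log 2 := Real.log_pos one_lt_two
  have hlogK : Real.log 2 ≤ Real.log K := Real.log_le_log two_pos hK
  have hD : 0 ≤ (2 : ℝ) ^ d / Real.log 2 := by positivity
  calc 2 ^ d * M + C₀ * M * Real.log K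
      = 2 ^ d / Real.log 2 * Real.log 2 * M + C₀ * M * Real.log K := by
        rw [div_mul_cancel₀ _ hlog2.ne']
    _ ≤ 2 ^ d / Real.log 2 * Real.log K * M + C₀ * M * Real.log K := by gcongr
    _ ≤ (2 ^ d / Real.log 2 + 1) * (1 + C₀) * Real.log K * M := by
        nlinarith [mul_nonneg (mul_nonneg hD hC₀) (mul_nonneg (hlog2.trans_le hlogK).le hM),
          mul_nonneg (hlog2.trans_le hlogK).le hM]

/-- Let `φ` be a bi-Lipschitz measure-preserving homeomorphism of `ℝ^d`, `β` measurable and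
bounded, `μ` the measure with density `|β(t,x)|²/t`, Carleson with norm at most `M`, with
`‖β‖_∞² ≤ C₀·M`. Then `μ^{♯φ}` (density `|β(t,φ(x))|²/t`) is Carleson with norm at most
`C·(1 + C₀)·log(K(φ))·M`, where `C` depends only on `d`. -/
theorem stmt16 (d : ℕ) (hd : 1 ≤ d) :
    ∃ C : ℝ, 0 < C ∧
      ∀ (φ : EuclideanSpace ℝ (Fin d) → EuclideanSpace ℝ (Fin d)),
        Function.Bijective φ →
        (∃ A : NNReal, LipschitzWith A φ) →
        (∃ A : NNReal, LipschitzWith A (Function.invFun φ)) →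
        MeasurePreserving φ volume volume →
        ∀ β : ℝ × EuclideanSpace ℝ (Fin d) → ℝ, Measurable β →
          eLpNorm β ⊤ (volume.restrict (Ioi (0 : ℝ) ×ˢ univ)) < ⊤ →
          ∀ (M C₀ : ℝ), 0 ≤ M → 0 < C₀ →
          (∀ (x : EuclideanSpace ℝ (Fin d)) (r : ℝ), 0 < r →
            ((volume.restrict (Ioi (0 : ℝ) ×ˢ univ)).withDensity
                (fun q => ENNReal.ofReal (β q ^ 2 / q.1))) (Ioc (0 : ℝ) r ×ˢ ball x r)
              ≤ ENNReal.ofReal M * volume (ball x r)) →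
          ((eLpNorm β ⊤ (volume.restrict (Ioi (0 : ℝ) ×ˢ univ))).toReal) ^ 2 ≤ C₀ * M →
          ∀ (x : EuclideanSpace ℝ (Fin d)) (r : ℝ), 0 < r →
            ((volume.restrict (Ioi (0 : ℝ) ×ˢ univ)).withDensity
                (fun q => ENNReal.ofReal (β (q.1, φ q.2) ^ 2 / q.1))) (Ioc (0 : ℝ) r ×ˢ ball x r)
              ≤ ENNReal.ofReal (C * (1 + C₀) * Real.log (Kconst φ) * M)
                * volume (ball x r) := by
  refine ⟨2 ^ d / Real.log 2 + 1, by positivity, ?_⟩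
  intro φ hbij ⟨A, hA⟩ ⟨A', hA'⟩ hφ β hβ hfin M C₀ hM hC₀ hcar hbound
  have : Nonempty (Fin d) := ⟨⟨0, hd⟩⟩
  have hβN : ∀ᵐ q ∂volume.restrict (Ioi (0 : ℝ) ×ˢ univ), β q ^ 2 ≤ C₀ * M :=
    (ae_sq_le_sq_toReal_eLpNorm_top hβ.aestronglyMeasurable hfin).mono fun q hq => hq.trans hbound
  exact (isCarlesonWith_sqDivTimeMeasure_comp hbij hA hA' hφ hβ hM (by positivity) hβN hcar).mono
    (two_pow_mul_add_mul_log_le hM hC₀.le (two_le_Kconst hbij.injective hA hA'))
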